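/- Let n, m, r ∈ ℕ with m < r < n. Let μ_i, i = 1, …, n, denote the averages over the n equispaced segments of S^eq_n on [−1,1], and let u_1, …, u_r be a basis of ℙ_{r−1}. Define N_{n,r} = (μ_i(u_j))_{1≤i≤n, 1≤j≤r} ∈ ℝ^{n×r}, let ι_1 < … < ι_m be indices in {1, …, n} and let N_{m,r} ∈ ℝ^{m×r} be the submatrix of N_{n,r} formed by the rows ι_1, …, ι_m. Set G = 2 N_{n,r}ᵀ N_{n,r}. Then the KKT matrix M = [[G, N_{m,r}ᵀ], [N_{m,r}, 0]] ∈ ℝ^{(r+m)×(r+m)} is nonsingular. -/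

import Mathlib

/-!
Let `M v = 0` with `v = (x, y)`. Pairing the first block row with `x` and using the second
one gives `2 ‖N x‖² = 0`, and then `Nₘᵀ y = 0`, so everything rests on `N` and `Nₘᵀ` having
trivial kernels. Both reduce to one fact: a polynomial of degree `< k` with zero
average over `k` segments with disjoint interiors vanishes, because by Rolle's theorem applied
to a primitive it has a root inside each segment. For `N` this is applied to the `n ≥ r`
equispaced segments. For `Nₘᵀ` it says that averages over the `m` chosen segments are
unisolvent on `ℙ_{m-1}`, so some `q ∈ ℙ_{m-1} ⊆ ℙ_{r-1}` has averages `y`; as `Nₘᵀ y = 0`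
means that `p ↦ ∑ yᵢ μ_{ιᵢ}(p)` vanishes on `ℙ_{r-1}`, evaluating at `q` gives `∑ yᵢ² = 0`.
-/

open Real Set Polynomial

/-- Segmental average: `μ_[a,b](f) = (b-a)⁻¹ ∫_a^b f`. -/
noncomputable def segAvg (a b : ℝ) (f : ℝ → ℝ) : ℝ := (b - a)⁻¹ * ∫ x in a..b, f x

open Matrix Module

theorem Matrix.dotProduct_transpose_mul_mulVec_self {m n R : Type*} [Fintype m] [Fintype n]
    [CommSemiring R] (N : Matrix m n R) (x : n → R) :
    x ⬝ᵥ (Nᵀ * N) *ᵥ x = N *ᵥ x ⬝ᵥ N *ᵥ x := by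
  rw [← mulVec_mulVec, dotProduct_mulVec, vecMul_transpose]

theorem Matrix.det_fromBlocks_transpose_zero_ne_zero {m n R : Type*} [Fintype m] [Fintype n]
    [DecidableEq m] [DecidableEq n] [CommRing R] [IsDomain R]
    {A : Matrix n n R} {B : Matrix m n R}
    (hA : ∀ x, B *ᵥ x = 0 → x ⬝ᵥ A *ᵥ x = 0 → x = 0) (hB : ∀ y, Bᵀ *ᵥ y = 0 → y = 0) :
    (fromBlocks A Bᵀ B 0).det ≠ 0 := by
  intro hdet
  obtain ⟨v, hv, hMv⟩ := exists_mulVec_eq_zero_iff.mpr hdet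
  set x := v ∘ Sum.inl
  set y := v ∘ Sum.inr
  have hv_eq : v = Sum.elim x y := (Sum.elim_comp_inl_inr v).symm
  rw [hv_eq, fromBlocks_mulVec] at hMv
  have h₁ : A *ᵥ x + Bᵀ *ᵥ y = 0 := funext fun i => congrFun hMv (Sum.inl i)
  have h₂ : B *ᵥ x + 0 *ᵥ y = 0 := funext fun i => congrFun hMv (Sum.inr i)
  rw [zero_mulVec, add_zero] at h₂
  have hx : x = 0 := by
    refine hA x h₂ ?_
    have := congrArg (x ⬝ᵥ ·) h₁
    rwa [dotProduct_add, dotProduct_mulVec x Bᵀ, vecMul_transpose, h₂, zero_dotProduct,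
      add_zero, dotProduct_zero] at this
  have hy : y = 0 := hB y (by simpa [hx] using h₁)
  exact hv (by rw [hv_eq, hx, hy]; ext (i | i) <;> rfl)

theorem exists_mem_Ioo_eq_zero_of_intervalIntegral_eq_zero {f : ℝ → ℝ} {a b : ℝ}
    (hf : Continuous f) (hab : a < b) (h : ∫ x in a..b, f x = 0) : ∃ c ∈ Ioo a b, f c = 0 :=
  exists_hasDerivAt_eq_zero hab
    (fun x _ => (hf.integral_hasStrictDerivAt a x).hasDerivAt.continuousAt.continuousWithinAt)
    (by rw [intervalIntegral.integral_same, h])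
    fun x _ => (hf.integral_hasStrictDerivAt a x).hasDerivAt

theorem intervalIntegral_eq_zero_of_segAvg_eq_zero {f : ℝ → ℝ} {a b : ℝ} (hab : a < b)
    (h : segAvg a b f = 0) : ∫ x in a..b, f x = 0 :=
  (mul_eq_zero.mp h).resolve_left (inv_ne_zero (sub_ne_zero.mpr hab.ne'))

noncomputable def segAvgₗ (a b : ℝ) : ℝ[X] →ₗ[ℝ] ℝ where
  toFun p := segAvg a b fun x => p.eval x
  map_add' p q := by
    simp only [segAvg, eval_add]
    rw [intervalIntegral.integral_add (p.continuous.intervalIntegrable _ _)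
      (q.continuous.intervalIntegrable _ _), mul_add]
  map_smul' c p := by
    simp only [segAvg, eval_smul, smul_eq_mul, RingHom.id_apply]
    rw [intervalIntegral.integral_const_mul]
    ring

namespace Polynomial

theorem span_range_eq_degreeLT {K : Type*} [Field K] {r : ℕ} {u : Fin r → K[X]}
    (hu : ∀ j, u j ∈ degreeLT K r) (huli : LinearIndependent K u) :
    Submodule.span K (Set.range u) = degreeLT K r := by
  have := Module.Finite.equiv (degreeLTEquiv K r).symm
  refine Submodule.eq_of_le_of_finrank_eq (Submodule.span_le.mpr (Set.range_subset_iff.mpr hu)) ?_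
  rw [finrank_span_eq_card huli, (degreeLTEquiv K r).finrank_eq]
  simp

variable {k : ℕ} {a b : Fin k → ℝ}

theorem eq_zero_of_segAvg_eq_zero (hab : ∀ i, a i < b i) (hsep : ∀ i j, i < j → b i ≤ a j)
    {p : ℝ[X]} (hp : p.degree < k) (h : ∀ i, segAvgₗ (a i) (b i) p = 0) : p = 0 := by
  rcases eq_or_ne p 0 with rfl | hp₀
  · rfl
  choose c hc hroot using fun i => exists_mem_Ioo_eq_zero_of_intervalIntegral_eq_zero
    p.continuous (hab i) (intervalIntegral_eq_zero_of_segAvg_eq_zero (hab i) (h i))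
  have hc_mono : StrictMono c := fun i j hij => ((hc i).2.trans_le (hsep i j hij)).trans (hc j).1
  refine p.eq_zero_of_natDegree_lt_card_of_eval_eq_zero hc_mono.injective hroot ?_
  simpa using (natDegree_lt_iff_degree_lt hp₀).mpr hp

theorem exists_mem_degreeLT_segAvg_eq (hab : ∀ i, a i < b i)
    (hsep : ∀ i j, i < j → b i ≤ a j) (y : Fin k → ℝ) :
    ∃ q ∈ degreeLT ℝ k, ∀ i, segAvgₗ (a i) (b i) q = y i := by
  have := Module.Finite.equiv (degreeLTEquiv ℝ k).symm
  let L : degreeLT ℝ k →ₗ[ℝ] Fin k → ℝ :=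
    LinearMap.pi fun i => (segAvgₗ (a i) (b i)).comp (degreeLT ℝ k).subtype
  have hL : Function.Injective L := by
    rw [← LinearMap.ker_eq_bot, LinearMap.ker_eq_bot']
    exact fun q hq => Subtype.ext <|
      eq_zero_of_segAvg_eq_zero hab hsep (mem_degreeLT.mp q.2) fun i => congrFun hq i
  have hrank : finrank ℝ (degreeLT ℝ k) = finrank ℝ (Fin k → ℝ) := by
    simp [(degreeLTEquiv ℝ k).finrank_eq]
  obtain ⟨q, hq⟩ := (LinearMap.injective_iff_surjective_of_finrank_eq_finrank hrank).mp hL y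
  exact ⟨q, q.2, fun i => congrFun hq i⟩

end Polynomial

section SegAvgMatrix

variable {k r : ℕ} {a b : Fin k → ℝ} {u : Fin r → ℝ[X]} {N : Matrix (Fin k) (Fin r) ℝ}

theorem mulVec_apply_eq_segAvgₗ (hN : ∀ i j, N i j = segAvgₗ (a i) (b i) (u j))
    (x : Fin r → ℝ) (i : Fin k) : (N *ᵥ x) i = segAvgₗ (a i) (b i) (∑ j, x j • u j) := by
  simp [mulVec, dotProduct, hN, mul_comm]

theorem vecMul_apply_eq_segAvgₗ (hN : ∀ i j, N i j = segAvgₗ (a i) (b i) (u j))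
    (y : Fin k → ℝ) (j : Fin r) : (y ᵥ* N) j = (∑ i, y i • segAvgₗ (a i) (b i)) (u j) := by
  simp [vecMul, dotProduct, hN]

theorem eq_zero_of_segAvg_mulVec_eq_zero (hab : ∀ i, a i < b i)
    (hsep : ∀ i j, i < j → b i ≤ a j) (hu : ∀ j, u j ∈ degreeLT ℝ r)
    (huli : LinearIndependent ℝ u) (hrk : r ≤ k) (hN : ∀ i j, N i j = segAvgₗ (a i) (b i) (u j))
    {x : Fin r → ℝ} (hx : N *ᵥ x = 0) : x = 0 := by
  have hdeg : (∑ j, x j • u j).degree < r :=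
    mem_degreeLT.mp (Submodule.sum_mem _ fun j _ => Submodule.smul_mem _ _ (hu j))
  have hp : ∑ j, x j • u j = 0 :=
    eq_zero_of_segAvg_eq_zero hab hsep (hdeg.trans_le (by exact_mod_cast hrk))
      fun i => by rw [← mulVec_apply_eq_segAvgₗ hN, hx, Pi.zero_apply]
  exact funext (Fintype.linearIndependent_iff.mp huli x hp)

theorem eq_zero_of_segAvg_vecMul_eq_zero (hab : ∀ i, a i < b i)
    (hsep : ∀ i j, i < j → b i ≤ a j) (hu : ∀ j, u j ∈ degreeLT ℝ r)
    (huli : LinearIndependent ℝ u) (hkr : k ≤ r) (hN : ∀ i j, N i j = segAvgₗ (a i) (b i) (u j))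
    {y : Fin k → ℝ} (hy : y ᵥ* N = 0) : y = 0 := by
  set ψ := ∑ i, y i • segAvgₗ (a i) (b i)
  have hψ : degreeLT ℝ r ≤ LinearMap.ker ψ := by
    rw [← span_range_eq_degreeLT hu huli, Submodule.span_le, Set.range_subset_iff]
    intro j
    rw [SetLike.mem_coe, LinearMap.mem_ker, ← vecMul_apply_eq_segAvgₗ hN, hy, Pi.zero_apply]
  obtain ⟨q, hq, hqy⟩ := exists_mem_degreeLT_segAvg_eq hab hsep y
  have hψq : ψ q = y ⬝ᵥ y := by simp [ψ, hqy, dotProduct]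
  rw [← dotProduct_self_eq_zero, ← hψq]
  exact hψ (degreeLT_mono hkr hq)

end SegAvgMatrix

noncomputable def equispacedNode (n : ℕ) (t : ℝ) : ℝ := -1 + 2 * t / n

theorem equispacedNode_lt_add_one {n : ℕ} (hn : 0 < n) (t : ℝ) :
    equispacedNode n t < equispacedNode n (t + 1) := by
  unfold equispacedNode
  have : (0 : ℝ) < n := by exact_mod_cast hn
  gcongr
  linarith

theorem equispacedNode_add_one_le {n i j : ℕ} (hij : i < j) :
    equispacedNode n (i + 1) ≤ equispacedNode n j := by
  unfold equispacedNode
  gcongr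
  exact_mod_cast hij

/-- Nonsingularity of the KKT matrix of the constrained segmental mock-Chebyshev method
(Theorem 4): here `μ_i` are the averages over the equispaced segments of `S^eq_n`,
`u_1, …, u_r` is a basis of `ℙ_{r-1}`, `N = (μ_i(u_j))` and `N_m` is the submatrix given
by the rows `ι_1 < … < ι_m`. -/
theorem stmt_13 (n m r : ℕ) (hmr : m < r) (hrn : r < n)
    (u : Fin r → Polynomial ℝ)
    (hu : ∀ j, u j ∈ Polynomial.degreeLT ℝ r)
    (huli : LinearIndependent ℝ u)
    (ι : Fin m → Fin n) (hι : StrictMono ι)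
    (N : Matrix (Fin n) (Fin r) ℝ)
    (hN : ∀ i j, N i j = segAvg (-1 + 2 * (i : ℝ) / n) (-1 + 2 * ((i : ℝ) + 1) / n)
        fun x => (u j).eval x)
    (Nm : Matrix (Fin m) (Fin r) ℝ) (hNm : ∀ i j, Nm i j = N (ι i) j) :
    IsUnit (Matrix.fromBlocks ((2 : ℝ) • (N.transpose * N)) Nm.transpose Nm 0).det := by
  have hab (i : Fin n) : equispacedNode n i < equispacedNode n (i + 1) :=
    equispacedNode_lt_add_one (by omega) i
  rw [isUnit_iff_ne_zero]
  refine det_fromBlocks_transpose_zero_ne_zero (fun x _ hx => ?_) (fun y hy => ?_)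
  · rw [smul_mulVec, dotProduct_smul, dotProduct_transpose_mul_mulVec_self, smul_eq_mul,
      mul_eq_zero, dotProduct_self_eq_zero] at hx
    exact eq_zero_of_segAvg_mulVec_eq_zero hab (fun i j hij => equispacedNode_add_one_le hij)
      hu huli hrn.le hN (hx.resolve_left two_ne_zero)
  · rw [mulVec_transpose] at hy
    exact eq_zero_of_segAvg_vecMul_eq_zero (fun i => hab (ι i))
      (fun i j hij => equispacedNode_add_one_le (hι hij)) hu huli hmr.le
      (fun i j => (hNm i j).trans (hN (ι i) j)) hy
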